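/- arXiv:1206.6145 — 7 statements merged into one kernel-verified Lean document; each statement's English description precedes it below -/
import Mathlib

section
/- Let N1, N3 be positive reals with N1 ≤ N3, P2 ≥ 0, and α ∈ [0,1]. Then (1/2)·log₂(1 + (α·P2/N1)·((N1+N3)/N3)) − (1/2)·log₂(1 + α·P2/N1) ≤ 1/2. -/
/-! Writing `x = a P₂ / N₁` and `c = (N₁ + N₃) / N₃`, the gap is `½ log₂ ((1 + c x) / (1 + x))`.
Since `c ≥ 1` the ratio is at most `c`, and `N₁ ≤ N₃` gives `c ≤ 2`. -/

open Real

theorem logb_one_add_mul_sub_logb_one_add_le {b x c : ℝ} (hb : 1 < b) (hx : 0 ≤ x)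
    (hc : 1 ≤ c) : logb b (1 + x * c) - logb b (1 + x) ≤ logb b c := by
  have hle : 1 + x * c ≤ c * (1 + x) := by nlinarith
  have hmono : logb b (1 + x * c) ≤ logb b (c * (1 + x)) :=
    logb_le_logb_of_le hb (by positivity) hle
  rw [logb_mul (by positivity) (by positivity)] at hmono
  linarith

theorem one_le_add_div_self {N₁ N₃ : ℝ} (hN₁ : 0 ≤ N₁) (hN₃ : 0 < N₃) :
    1 ≤ (N₁ + N₃) / N₃ := by
  rw [le_div_iff₀ hN₃]; linarith

theorem add_div_self_le_two {N₁ N₃ : ℝ} (hN₃ : 0 < N₃) (hN : N₁ ≤ N₃) :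
    (N₁ + N₃) / N₃ ≤ 2 := by
  rw [div_le_iff₀ hN₃]; linarith

theorem bc_adaptation_gap_general (N1 N3 P2 a : ℝ) (hN1 : 0 < N1) (hN3 : 0 < N3)
    (hN : N1 ≤ N3) (hP : 0 ≤ P2) (ha0 : 0 ≤ a) :
    (1/2) * Real.logb 2 (1 + (a * P2 / N1) * ((N1 + N3) / N3))
      - (1/2) * Real.logb 2 (1 + a * P2 / N1) ≤ 1/2 := by
  have hgap := logb_one_add_mul_sub_logb_one_add_le (b := 2) one_lt_two
    (by positivity : 0 ≤ a * P2 / N1) (one_le_add_div_self hN1.le hN3)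
  have hc : logb 2 ((N1 + N3) / N3) ≤ 1 := by
    calc logb 2 ((N1 + N3) / N3) ≤ logb 2 2 :=
          logb_le_logb_of_le one_lt_two (by positivity) (add_div_self_le_two hN3 hN)
      _ = 1 := logb_self_eq_one one_lt_two
  linarith

theorem bc_adaptation_gap (N1 N3 P2 a : ℝ) (hN1 : 0 < N1) (hN3 : 0 < N3)
    (hN : N1 ≤ N3) (hP : 0 ≤ P2) (ha0 : 0 ≤ a) (ha1 : a ≤ 1) :
    (1/2) * Real.logb 2 (1 + (a * P2 / N1) * ((N1 + N3) / N3))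
      - (1/2) * Real.logb 2 (1 + a * P2 / N1) ≤ 1/2 :=
  bc_adaptation_gap_general N1 N3 P2 a hN1 hN3 hN hP ha0
end

section
/- Let SNR, INR be nonnegative reals with SNR ≤ INR (strong interference). Then (1/2)·log₂(1 + SNR + INR + 2√(SNR·INR)) + (1/2)·log₂(1 + SNR/(1+INR)) − (1/2)·log₂(1 + SNR + INR) ≤ 1. -/
/-!
By AM–GM, `1 + SNR + INR + 2√(SNR·INR) ≤ 2 (1 + SNR + INR)`, and strong interference gives
`SNR / (1 + INR) ≤ 1`. Each of the two half-logarithms therefore exceeds its counterpart by at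
most half a bit.
-/

open Real

lemma two_mul_sqrt_mul_le_add {x y : ℝ} (hx : 0 ≤ x) (hy : 0 ≤ y) : 2 * √(x * y) ≤ x + y := by
  rw [sqrt_mul hx]
  nlinarith [sq_nonneg (√x - √y), sq_sqrt hx, sq_sqrt hy]

lemma logb_two_le_one_add_logb_of_le_two_mul {x y : ℝ} (hx : 0 < x) (hxy : x ≤ 2 * y) :
    logb 2 x ≤ 1 + logb 2 y := by
  have hy : 0 < y := by linarith
  calc logb 2 x ≤ logb 2 (2 * y) := logb_le_logb_of_le one_lt_two hx hxy
    _ = 1 + logb 2 y := by rw [logb_mul two_ne_zero hy.ne', logb_self_eq_one one_lt_two]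

theorem strong_interference_gap_general (SNR INR : ℝ) (hS : 0 ≤ SNR)
    (hstrong : SNR ≤ INR) :
    (1/2) * Real.logb 2 (1 + SNR + INR + 2 * Real.sqrt (SNR * INR))
      + (1/2) * Real.logb 2 (1 + SNR / (1 + INR))
      - (1/2) * Real.logb 2 (1 + SNR + INR) ≤ 1 := by
  have hI : 0 ≤ INR := hS.trans hstrong
  have hsum : logb 2 (1 + SNR + INR + 2 * √(SNR * INR)) ≤ 1 + logb 2 (1 + SNR + INR) :=
    logb_two_le_one_add_logb_of_le_two_mul (by positivity)
      (by linarith [two_mul_sqrt_mul_le_add hS hI])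
  have hratio : SNR / (1 + INR) ≤ 1 := (div_le_one (by linarith)).2 (by linarith)
  have hcross : logb 2 (1 + SNR / (1 + INR)) ≤ 1 := by
    simpa using logb_two_le_one_add_logb_of_le_two_mul (y := 1) (by positivity) (by linarith)
  linarith

theorem strong_interference_gap (SNR INR : ℝ) (hS : 0 ≤ SNR) (hI : 0 ≤ INR)
    (hstrong : SNR ≤ INR) :
    (1/2) * Real.logb 2 (1 + SNR + INR + 2 * Real.sqrt (SNR * INR))
      + (1/2) * Real.logb 2 (1 + SNR / (1 + INR))
      - (1/2) * Real.logb 2 (1 + SNR + INR) ≤ 1 :=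
  strong_interference_gap_general SNR INR hS hstrong
end

section
/- Let SNR, INR be nonnegative reals with INR ≥ 1. Then (1/2)·log₂(1 + SNR + INR + 2√(SNR·INR)) + (1/2)·log₂(1 + SNR/(1+INR)) − [(1/2)·log₂(1 + INR + SNR) + (1/2)·log₂(2 + SNR/INR) − 1] ≤ 3/2. -/
/-!
By AM–GM, `1 + SNR + INR + 2√(SNR·INR) ≤ 2(1 + INR + SNR)`, so the first term of the outer bound
exceeds the first term of `R_HK1` by at most half a bit; and `1 + SNR/(1+INR) ≤ 2 + SNR/INR`, so the
second term of the outer bound is dominated by the second term of `R_HK1`. Together with the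
constant `-1` in `R_HK1` this leaves a gap of at most `1/2 + 1 = 3/2`.
-/

namespace Real

lemma two_mul_sqrt_mul_le_add {a b : ℝ} (ha : 0 ≤ a) (hb : 0 ≤ b) : 2 * √(a * b) ≤ a + b := by
  nlinarith [sq_sqrt (mul_nonneg ha hb), sqrt_nonneg (a * b), sq_nonneg (a - b)]

lemma logb_two_le_one_add_logb_two {x y : ℝ} (hx : 0 < x) (h : x ≤ 2 * y) :
    logb 2 x ≤ 1 + logb 2 y := by
  have hy : 0 < y := by linarith
  calc logb 2 x ≤ logb 2 (2 * y) := logb_le_logb_of_le one_lt_two hx h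
    _ = 1 + logb 2 y := by rw [logb_mul two_ne_zero hy.ne', logb_self_eq_one one_lt_two]

end Real

theorem weak_interference_gap_HK1 (SNR INR : ℝ) (hS : 0 ≤ SNR) (hI : 1 ≤ INR) :
    (1/2) * Real.logb 2 (1 + SNR + INR + 2 * Real.sqrt (SNR * INR))
      + (1/2) * Real.logb 2 (1 + SNR / (1 + INR))
      - ((1/2) * Real.logb 2 (1 + INR + SNR) + (1/2) * Real.logb 2 (2 + SNR / INR) - 1)
      ≤ 3/2 := by
  have hI0 : 0 < INR := one_pos.trans_le hI
  have h_first : Real.logb 2 (1 + SNR + INR + 2 * Real.sqrt (SNR * INR))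
      ≤ 1 + Real.logb 2 (1 + INR + SNR) :=
    Real.logb_two_le_one_add_logb_two (by positivity)
      (by linarith [Real.two_mul_sqrt_mul_le_add hS hI0.le])
  have h_second : Real.logb 2 (1 + SNR / (1 + INR)) ≤ Real.logb 2 (2 + SNR / INR) :=
    Real.logb_le_logb_of_le one_lt_two (by positivity)
      (by linarith [div_le_div_of_nonneg_left hS hI0 (by linarith : INR ≤ 1 + INR)])
  linarith
end

section
/- Let SNR, INR be positive reals with INR ≥ 1. Then log₂(1 + INR + SNR − (INR·SNR)/(1+INR)) − [log₂(1 + INR + SNR/INR) − 1] ≤ 1. -/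
/-! The outer-bound argument simplifies to `1 + INR + SNR / (1 + INR)`, which is at most the
Han–Kobayashi argument `1 + INR + SNR / INR`; the claimed gap of one bit is then just the
monotonicity of `logb 2`. -/

theorem one_add_add_sub_mul_div_one_add {K : Type*} [Field K] {x : K} (hx : 1 + x ≠ 0) (y : K) :
    1 + x + y - x * y / (1 + x) = 1 + x + y / (1 + x) := by
  field_simp
  ring

theorem weak_interference_gap_forward_HK2 (SNR INR : ℝ) (hS : 0 < SNR) (hI : 1 ≤ INR) :
    Real.logb 2 (1 + INR + SNR - (INR * SNR) / (1 + INR))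
      - (Real.logb 2 (1 + INR + SNR / INR) - 1) ≤ 1 := by
  have hI₀ : 0 < INR := by linarith
  rw [one_add_add_sub_mul_div_one_add (by positivity) SNR]
  have hle : 1 + INR + SNR / (1 + INR) ≤ 1 + INR + SNR / INR := by
    gcongr
    linarith
  have := Real.logb_le_logb_of_le one_lt_two (by positivity) hle
  linarith
end

section
/- Let SNR, INR be positive reals with INR ≥ 1 and SNR ≥ INR³. Then log₂(1 + (√SNR + √INR)²/(1+INR)) − [log₂(1 + INR + SNR/INR) − 1] ≤ 2. -/
/-!
Bounding `(√SNR + √INR)²` by `2 (SNR + INR)` and using `INR² ≤ SNR` shows that the argument of the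
first logarithm is at most twice the argument of the second, so the first logarithm exceeds the
second by at most one bit; the `- 1` in the Han–Kobayashi rate accounts for the other bit.
-/

open Real

lemma Real.logb_le_logb_add_one_of_le_base_mul {b x y : ℝ} (hb : 1 < b) (hx : 0 < x) (hy : 0 < y)
    (hxy : x ≤ b * y) : logb b x ≤ logb b y + 1 := by
  calc logb b x ≤ logb b (b * y) := logb_le_logb_of_le hb hx hxy
    _ = logb b y + 1 := by
      rw [logb_mul (by positivity) hy.ne', logb_self_eq_one hb, add_comm]

lemma Real.sqrt_add_sqrt_sq_le {x y : ℝ} (hx : 0 ≤ x) (hy : 0 ≤ y) :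
    (√x + √y) ^ 2 ≤ 2 * (x + y) := by
  simpa only [sq_sqrt hx, sq_sqrt hy] using add_sq_le (a := √x) (b := √y)

lemma div_one_add_le_div_of_sq_le {S I : ℝ} (hI : 0 < I) (hIS : I ^ 2 ≤ S) :
    (S + I) / (1 + I) ≤ S / I := by
  rw [div_le_div_iff₀ (by positivity) hI]
  nlinarith

lemma one_add_sqrt_add_sqrt_sq_div_le {S I : ℝ} (hI : 0 < I) (hIS : I ^ 2 ≤ S) :
    1 + (√S + √I) ^ 2 / (1 + I) ≤ 2 * (1 + I + S / I) := by
  have hS : 0 ≤ S := (sq_nonneg I).trans hIS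
  have hsum : (√S + √I) ^ 2 / (1 + I) ≤ 2 * (S / I) :=
    calc (√S + √I) ^ 2 / (1 + I) ≤ 2 * (S + I) / (1 + I) := by
          gcongr
          exact sqrt_add_sqrt_sq_le hS hI.le
      _ = 2 * ((S + I) / (1 + I)) := mul_div_assoc _ _ _
      _ ≤ 2 * (S / I) := by gcongr 2 * ?_; exact div_one_add_le_div_of_sq_le hI hIS
  linarith

theorem weak_interference_gap_backward_HK2_general (SNR INR : ℝ) (hI : 1 ≤ INR)
    (hreg : INR ^ 3 ≤ SNR) :
    Real.logb 2 (1 + (Real.sqrt SNR + Real.sqrt INR) ^ 2 / (1 + INR))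
      - (Real.logb 2 (1 + INR + SNR / INR) - 1) ≤ 2 := by
  have hI0 : 0 < INR := one_pos.trans_le hI
  have hsq : INR ^ 2 ≤ SNR :=
    (pow_le_pow_right₀ hI (by norm_num : 2 ≤ 3)).trans hreg
  have hS : 0 < SNR := (pow_pos hI0 2).trans_le hsq
  have hlog := logb_le_logb_add_one_of_le_base_mul one_lt_two (by positivity) (by positivity)
    (one_add_sqrt_add_sqrt_sq_div_le hI0 hsq)
  linarith

theorem weak_interference_gap_backward_HK2 (SNR INR : ℝ) (hS : 0 < SNR) (hI : 1 ≤ INR)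
    (hreg : INR ^ 3 ≤ SNR) :
    Real.logb 2 (1 + (Real.sqrt SNR + Real.sqrt INR) ^ 2 / (1 + INR))
      - (Real.logb 2 (1 + INR + SNR / INR) - 1) ≤ 2 :=
  weak_interference_gap_backward_HK2_general SNR INR hI hreg
end

section
/- Let SNR ≥ 0 and 0 ≤ INR < 1. Then (1/2)·log₂(1 + SNR + INR + 2√(SNR·INR)) + (1/2)·log₂(1 + SNR/(1+INR)) − log₂(1 + SNR/(1+INR)) ≤ 1. -/
/-!
The gap is `(1/2) logb 2 (A / B)` with `A = 1 + SNR + INR + 2√(SNR·INR)` and `B = 1 + SNR/(1 + INR)`,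
so it suffices that `A ≤ 4B`. By AM-GM, `A ≤ 1 + 2·SNR + 2·INR < 3 + 2·SNR`, while `INR < 1` gives
`SNR/(1 + INR) ≥ SNR/2`, i.e. `4B ≥ 4 + 2·SNR`.
-/

open Real

lemma two_mul_sqrt_mul_le_add_s8 {a b : ℝ} (hab : 0 ≤ a + b) : 2 * √(a * b) ≤ a + b := by
  have : √(a * b) ≤ (a + b) / 2 :=
    Real.sqrt_le_iff.mpr ⟨by linarith, by nlinarith [sq_nonneg (a - b)]⟩
  linarith

lemma half_logb_sub_half_logb_le_one {b x y : ℝ} (hb : 1 < b) (hx : 0 < x) (hy : 0 < y)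
    (hxy : x ≤ b ^ 2 * y) : (1/2) * logb b x - (1/2) * logb b y ≤ 1 := by
  have hlog : logb b x ≤ 2 + logb b y := by
    calc logb b x ≤ logb b (b ^ 2 * y) := logb_le_logb_of_le hb hx hxy
      _ = 2 + logb b y := by
        rw [logb_mul (by positivity) hy.ne', logb_pow, logb_self_eq_one hb]
        norm_num
  linarith

lemma one_add_add_add_two_sqrt_le_four_mul {SNR INR : ℝ} (hS : 0 ≤ SNR) (hI0 : 0 ≤ INR)
    (hI1 : INR < 1) :
    1 + SNR + INR + 2 * √(SNR * INR) ≤ 4 * (1 + SNR / (1 + INR)) := by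
  have hamgm : 2 * √(SNR * INR) ≤ SNR + INR := two_mul_sqrt_mul_le_add_s8 (by linarith)
  have hhalf : SNR / 2 ≤ SNR / (1 + INR) :=
    div_le_div_of_nonneg_left hS (by linarith) (by linarith)
  linarith

theorem small_INR_gap (SNR INR : ℝ) (hS : 0 ≤ SNR) (hI0 : 0 ≤ INR) (hI1 : INR < 1) :
    (1/2) * Real.logb 2 (1 + SNR + INR + 2 * Real.sqrt (SNR * INR))
      + (1/2) * Real.logb 2 (1 + SNR / (1 + INR))
      - Real.logb 2 (1 + SNR / (1 + INR)) ≤ 1 := by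
  have hB : 0 < 1 + SNR / (1 + INR) := by
    have : 0 ≤ SNR / (1 + INR) := div_nonneg hS (by linarith)
    linarith
  have hA : 0 < 1 + SNR + INR + 2 * √(SNR * INR) := by positivity
  have := half_logb_sub_half_logb_le_one one_lt_two hA hB
    ((one_add_add_add_two_sqrt_le_four_mul hS hI0 hI1).trans_eq (by norm_num))
  linarith
end

section
/- Let SNR, INR > 0 and consider f(λ, θ) = log₂(1 + INR + SNR + 2λ·cos θ·√(SNR·INR) − (SNR·INR + INR²·λ² + 2·√SNR·INR^{3/2}·λ·cos θ)/(1+INR)) for λ ∈ [0,1], θ ∈ [0, 2π]. If SNR ≤ INR³ then the maximum of f over this domain equals log₂(1 + INR + SNR/INR), attained at θ = 0 and λ = √(SNR·INR)/INR². -/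
/-!
Write `s = √(SNR·INR)`, so that `√SNR · INR^{3/2} = INR · s`. Clearing the denominator `1 + INR`,
the argument of the logarithm becomes `1 + INR + (SNR + 2 l s cos θ - INR² l²) / (1 + INR)`.
Since `cos θ ≤ 1`, the numerator is at most `SNR` plus the concave parabola `2 l s - INR² l²`,
whose maximum `s² / INR² = SNR / INR` is attained at `l = s / INR²`; this gives exactly
`1 + INR + SNR / INR`. On the domain the argument stays positive, so `logb 2` preserves the bound.
-/

open Real

noncomputable def backwardArg (SNR INR l c : ℝ) : ℝ :=
  1 + INR + SNR + 2 * l * c * Real.sqrt (SNR * INR)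
    - (SNR * INR + INR ^ 2 * l ^ 2 + 2 * Real.sqrt SNR * INR ^ ((3:ℝ)/2) * l * c) / (1 + INR)

lemma rpow_three_halves {x : ℝ} (hx : 0 ≤ x) : x ^ ((3:ℝ)/2) = x * √x := by
  rw [show ((3:ℝ)/2) = 1 + 1/2 by norm_num, rpow_add' hx (by norm_num), rpow_one,
    ← sqrt_eq_rpow]

lemma two_mul_mul_sub_mul_sq_le {a : ℝ} (ha : 0 < a) (l s : ℝ) :
    2 * l * s - a * l ^ 2 ≤ s ^ 2 / a := by
  rw [le_div_iff₀ ha]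
  nlinarith [sq_nonneg (a * l - s)]

lemma two_mul_mul_sub_mul_sq_at_vertex {a : ℝ} (ha : a ≠ 0) (s : ℝ) :
    2 * (s / a) * s - a * (s / a) ^ 2 = s ^ 2 / a := by
  field_simp
  ring

lemma add_div_div_one_add {x y : ℝ} (hy : 0 < y) : (x + x / y) / (1 + y) = x / y := by
  field_simp
  ring

section backwardArg

variable {SNR INR : ℝ}

lemma backwardArg_eq (hS : 0 ≤ SNR) (hI : 0 ≤ INR) (l c : ℝ) :
    backwardArg SNR INR l c
      = 1 + INR + (SNR + 2 * l * c * √(SNR * INR) - INR ^ 2 * l ^ 2) / (1 + INR) := by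
  rw [backwardArg, rpow_three_halves hI, sqrt_mul hS]
  field_simp
  ring

lemma backwardArg_pos (hS : 0 ≤ SNR) (hI : 0 ≤ INR) {l c : ℝ} (hl₀ : 0 ≤ l) (hl₁ : l ≤ 1)
    (hc : -1 ≤ c) : 0 < backwardArg SNR INR l c := by
  set s := √(SNR * INR)
  have hs : s ^ 2 = SNR * INR := sq_sqrt (by positivity)
  have h2s : 2 * s ≤ SNR + INR := by
    nlinarith [sq_nonneg (SNR - INR), sq_nonneg (SNR + INR - 2 * s)]
  have hlc : -1 ≤ l * c := by nlinarith
  have hlcs : -s ≤ l * c * s := by nlinarith [sqrt_nonneg (SNR * INR)]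
  have hl2 : INR ^ 2 * l ^ 2 ≤ INR ^ 2 :=
    mul_le_of_le_one_right (sq_nonneg INR) (pow_le_one₀ hl₀ hl₁)
  rw [backwardArg_eq hS hI, ← sub_lt_iff_lt_add', zero_sub, lt_div_iff₀ (by positivity)]
  nlinarith

lemma sq_sqrt_mul_div_sq (hS : 0 ≤ SNR) (hI : 0 < INR) :
    √(SNR * INR) ^ 2 / INR ^ 2 = SNR / INR := by
  rw [sq_sqrt (by positivity)]
  field_simp

lemma backwardArg_le (hS : 0 ≤ SNR) (hI : 0 < INR) {l c : ℝ} (hl : 0 ≤ l) (hc : c ≤ 1) :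
    backwardArg SNR INR l c ≤ 1 + INR + SNR / INR := by
  set s := √(SNR * INR)
  have hlc : l * c * s ≤ l * s :=
    mul_le_mul_of_nonneg_right (mul_le_of_le_one_right hl hc) (sqrt_nonneg _)
  have hparabola := two_mul_mul_sub_mul_sq_le (pow_pos hI 2) l s
  rw [sq_sqrt_mul_div_sq hS hI] at hparabola
  calc backwardArg SNR INR l c
      ≤ 1 + INR + (SNR + SNR / INR) / (1 + INR) := by
        rw [backwardArg_eq hS hI.le]
        gcongr
        linarith
    _ = 1 + INR + SNR / INR := by rw [add_div_div_one_add hI]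

lemma backwardArg_at_vertex (hS : 0 ≤ SNR) (hI : 0 < INR) :
    backwardArg SNR INR (√(SNR * INR) / INR ^ 2) 1 = 1 + INR + SNR / INR := by
  have hvertex := two_mul_mul_sub_mul_sq_at_vertex (pow_ne_zero 2 hI.ne') √(SNR * INR)
  rw [sq_sqrt_mul_div_sq hS hI] at hvertex
  rw [backwardArg_eq hS hI.le, mul_one, add_sub_assoc, hvertex, add_div_div_one_add hI]

end backwardArg

theorem backward_outer_bound_opt_general (SNR INR : ℝ) (hS : 0 < SNR) (hI : 0 < INR) :
    let f : ℝ → ℝ → ℝ := fun l θ =>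
      Real.logb 2 (1 + INR + SNR + 2 * l * Real.cos θ * Real.sqrt (SNR * INR)
        - (SNR * INR + INR ^ 2 * l ^ 2
            + 2 * Real.sqrt SNR * INR ^ ((3:ℝ)/2) * l * Real.cos θ) / (1 + INR))
    (∀ l ∈ Set.Icc (0:ℝ) 1, ∀ θ ∈ Set.Icc (0:ℝ) (2 * Real.pi),
        f l θ ≤ Real.logb 2 (1 + INR + SNR / INR)) ∧
      f (Real.sqrt (SNR * INR) / INR ^ 2) 0 = Real.logb 2 (1 + INR + SNR / INR) := by
  intro f
  refine ⟨fun l ⟨hl₀, hl₁⟩ θ _ => ?_, ?_⟩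
  · exact logb_le_logb_of_le one_lt_two
      (backwardArg_pos hS.le hI.le hl₀ hl₁ (neg_one_le_cos θ))
      (backwardArg_le hS.le hI hl₀ (cos_le_one θ))
  · change logb 2 (backwardArg SNR INR _ (cos 0)) = _
    rw [cos_zero, backwardArg_at_vertex hS.le hI]

theorem backward_outer_bound_opt (SNR INR : ℝ) (hS : 0 < SNR) (hI : 0 < INR)
    (hreg : SNR ≤ INR ^ 3) :
    let f : ℝ → ℝ → ℝ := fun l θ =>
      Real.logb 2 (1 + INR + SNR + 2 * l * Real.cos θ * Real.sqrt (SNR * INR)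
        - (SNR * INR + INR ^ 2 * l ^ 2
            + 2 * Real.sqrt SNR * INR ^ ((3:ℝ)/2) * l * Real.cos θ) / (1 + INR))
    (∀ l ∈ Set.Icc (0:ℝ) 1, ∀ θ ∈ Set.Icc (0:ℝ) (2 * Real.pi),
        f l θ ≤ Real.logb 2 (1 + INR + SNR / INR)) ∧
      f (Real.sqrt (SNR * INR) / INR ^ 2) 0 = Real.logb 2 (1 + INR + SNR / INR) :=
  backward_outer_bound_opt_general SNR INR hS hI
end
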